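/- arXiv:2305.16047 — 2 statements merged into one kernel-verified Lean document; each statement's English description precedes it below -/
import Mathlib

section
/- Let h₁, h₂ ∈ ℝʳ be nonzero and collinear with h₁ᵀh₂ > 0, let P > 0 and C_d = 1 + P(‖h₁‖² + ‖h₂‖²). Then Δ = (√C_d + 2P·h₁ᵀh₂)² − 4(1+P‖h₁‖²)(1+P‖h₂‖²) = 4P·h₁ᵀh₂·√C_d − 3C_d. Consequently, if P·h₁ᵀh₂/√C_d ≥ 3/4 then Δ ≥ 0. -/
open Matrix

/-- Corollary 1, case 1 (collinear channels): with `C_d = 1 + P(‖h₁‖² + ‖h₂‖²)`,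
`Δ = 4P h₁ᵀh₂ √C_d − 3C_d`, and if `P h₁ᵀh₂ / √C_d ≥ 3/4` then `Δ ≥ 0`. -/
theorem simo_collinear_condition {r : ℕ} (h₁ h₂ : Fin r → ℝ) (c P : ℝ)
    (h1ne : h₁ ≠ 0) (h2ne : h₂ ≠ 0) (hcol : h₂ = c • h₁)
    (hip : 0 < h₁ ⬝ᵥ h₂) (hP : 0 < P)
    (Cd : ℝ) (hCd : Cd = 1 + P * (h₁ ⬝ᵥ h₁ + h₂ ⬝ᵥ h₂)) :
    ((Real.sqrt Cd + 2 * P * (h₁ ⬝ᵥ h₂)) ^ 2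
        - 4 * (1 + P * (h₁ ⬝ᵥ h₁)) * (1 + P * (h₂ ⬝ᵥ h₂))
      = 4 * P * (h₁ ⬝ᵥ h₂) * Real.sqrt Cd - 3 * Cd) ∧
    (P * (h₁ ⬝ᵥ h₂) / Real.sqrt Cd ≥ 3 / 4 →
      0 ≤ (Real.sqrt Cd + 2 * P * (h₁ ⬝ᵥ h₂)) ^ 2
        - 4 * (1 + P * (h₁ ⬝ᵥ h₁)) * (1 + P * (h₂ ⬝ᵥ h₂))) := by
  have ha : (0:ℝ) ≤ h₁ ⬝ᵥ h₁ := by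
    apply Finset.sum_nonneg; intro i _; exact mul_self_nonneg _
  have hbnn : (0:ℝ) ≤ h₂ ⬝ᵥ h₂ := by
    apply Finset.sum_nonneg; intro i _; exact mul_self_nonneg _
  have ht : h₁ ⬝ᵥ h₂ = c * (h₁ ⬝ᵥ h₁) := by
    rw [hcol]; simp [dotProduct, Finset.mul_sum, mul_comm, mul_left_comm]
  have hb : h₂ ⬝ᵥ h₂ = c * (c * (h₁ ⬝ᵥ h₁)) := by
    rw [hcol]; simp [dotProduct, Finset.mul_sum, mul_comm, mul_left_comm]
  have hsq : (h₁ ⬝ᵥ h₂) * (h₁ ⬝ᵥ h₂) = (h₁ ⬝ᵥ h₁) * (h₂ ⬝ᵥ h₂) := by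
    rw [ht, hb]; ring
  have hCdpos : 0 < Cd := by nlinarith
  have hs : Real.sqrt Cd * Real.sqrt Cd = Cd := Real.mul_self_sqrt hCdpos.le
  have hspos : 0 < Real.sqrt Cd := Real.sqrt_pos.mpr hCdpos
  have key : (Real.sqrt Cd + 2 * P * (h₁ ⬝ᵥ h₂)) ^ 2
        - 4 * (1 + P * (h₁ ⬝ᵥ h₁)) * (1 + P * (h₂ ⬝ᵥ h₂))
      = 4 * P * (h₁ ⬝ᵥ h₂) * Real.sqrt Cd - 3 * Cd := by
    linear_combination hs + 4 * P ^ 2 * hsq + 4 * hCd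
  refine ⟨key, fun hge => ?_⟩
  have h34 : 3 / 4 * Real.sqrt Cd ≤ P * (h₁ ⬝ᵥ h₂) := (le_div_iff₀ hspos).mp hge
  rw [key]
  nlinarith [mul_le_mul_of_nonneg_right h34 hspos.le, hs]
end

section
/- Let h₁, h₂ ∈ ℝʳ be linearly independent with C_d(P) = (1+λ₁P)(1+λ₂P) where λ₁, λ₂ > 0 are the nonzero eigenvalues of h₁h₁ᵀ + h₂h₂ᵀ. Define Δ(P) = (√C_d(P) + 2P·h₁ᵀh₂)² − 4(1+P‖h₁‖²)(1+P‖h₂‖²). If (√(λ₁λ₂) + 2h₁ᵀh₂)² > 4‖h₁‖²‖h₂‖², then there exists P* > 0 such that Δ(P) ≥ 0 for all P ≥ P*. -/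
open Matrix

/-- Corollary 1, case 2 (linearly independent channels): if
`(√(λ₁λ₂) + 2h₁ᵀh₂)² > 4‖h₁‖²‖h₂‖²` then `Δ(P) ≥ 0` for all large enough `P`,
where `Δ(P) = (√((1+λ₁P)(1+λ₂P)) + 2P h₁ᵀh₂)² − 4(1+P‖h₁‖²)(1+P‖h₂‖²)`. -/
theorem simo_linear_indep_condition {r : ℕ} (h₁ h₂ : Fin r → ℝ)
    (hind : LinearIndependent ℝ ![h₁, h₂]) (lam₁ lam₂ : ℝ)
    (hl1 : 0 < lam₁) (hl2 : 0 < lam₂)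
    (hsum : lam₁ + lam₂ = h₁ ⬝ᵥ h₁ + h₂ ⬝ᵥ h₂)
    (hprod : lam₁ * lam₂ = (h₁ ⬝ᵥ h₁) * (h₂ ⬝ᵥ h₂) - (h₁ ⬝ᵥ h₂) ^ 2)
    (hcond : (Real.sqrt (lam₁ * lam₂) + 2 * (h₁ ⬝ᵥ h₂)) ^ 2
        > 4 * (h₁ ⬝ᵥ h₁) * (h₂ ⬝ᵥ h₂)) :
    ∃ Pstar : ℝ, 0 < Pstar ∧ ∀ P ≥ Pstar,
      0 ≤ (Real.sqrt ((1 + lam₁ * P) * (1 + lam₂ * P)) + 2 * P * (h₁ ⬝ᵥ h₂)) ^ 2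
        - 4 * (1 + P * (h₁ ⬝ᵥ h₁)) * (1 + P * (h₂ ⬝ᵥ h₂)) := by
  set a := h₁ ⬝ᵥ h₁ with ha
  set b := h₂ ⬝ᵥ h₂ with hb
  set c := h₁ ⬝ᵥ h₂ with hc
  set L := lam₁ * lam₂ with hL
  have hLpos : 0 < L := mul_pos hl1 hl2
  set s := Real.sqrt L with hs
  have hspos : 0 < s := Real.sqrt_pos.mpr hLpos
  have hs2 : s ^ 2 = L := Real.sq_sqrt hLpos.le
  -- key: 4 c s > 3 L
  have hkey : 4 * c * s > 3 * L := by nlinarith [hcond, hs2, hprod]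
  have hcpos : 0 < c := by nlinarith
  set ε := 4 * c * s - 3 * L with hε
  have hεpos : 0 < ε := by simp only [hε]; linarith
  refine ⟨max 1 ((3 * (lam₁ + lam₂) + 3) / ε + 1), lt_of_lt_of_le one_pos (le_max_left _ _), ?_⟩
  intro P hP
  have hP1 : 1 ≤ P := le_trans (le_max_left _ _) hP
  have hPpos : 0 < P := lt_of_lt_of_le one_pos hP1
  have hPq : (3 * (lam₁ + lam₂) + 3) / ε + 1 ≤ P := le_trans (le_max_right _ _) hP
  have hPε : 3 * (lam₁ + lam₂) + 3 ≤ ε * P := by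
    rw [div_add' _ _ _ (ne_of_gt hεpos), div_le_iff₀ hεpos] at hPq
    nlinarith
  have hX : (0:ℝ) ≤ (1 + lam₁ * P) * (1 + lam₂ * P) := by positivity
  set S := Real.sqrt ((1 + lam₁ * P) * (1 + lam₂ * P)) with hS
  have hS2 : S ^ 2 = (1 + lam₁ * P) * (1 + lam₂ * P) := Real.sq_sqrt hX
  have hSlb : s * P ≤ S := by
    have : Real.sqrt (L * P ^ 2) ≤ S := by
      apply Real.sqrt_le_sqrt; nlinarith
    have h2 : Real.sqrt (L * P ^ 2) = s * P := by
      rw [Real.sqrt_mul hLpos.le, Real.sqrt_sq hPpos.le]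
    linarith [this, h2.symm.le]
  -- Δ = εP² + 4cP(S - sP) - 3(λ₁+λ₂)P - 3 using hsum, hprod
  have e1 : (S + 2 * P * c) ^ 2 - 4 * (1 + P * a) * (1 + P * b)
      = 4 * c * P * (S - s * P) + ε * P ^ 2 - 3 * (lam₁ + lam₂) * P - 3 := by
    have hs2' : s ^ 2 = lam₁ * lam₂ := hs2.trans hL
    simp only [hε, hL]
    linear_combination hS2 + 4 * P * hsum + 4 * P ^ 2 * hprod
  rw [e1]
  have t1 : 0 ≤ 4 * c * P * (S - s * P) :=
    mul_nonneg (by positivity) (sub_nonneg.mpr hSlb)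
  have t2 : (3 * (lam₁ + lam₂) + 3) * P ≤ ε * P ^ 2 := by
    have h := mul_le_mul_of_nonneg_right hPε hPpos.le
    calc (3 * (lam₁ + lam₂) + 3) * P ≤ ε * P * P := h
      _ = ε * P ^ 2 := by ring
  have t3 : (3:ℝ) ≤ 3 * P := by linarith
  linarith [t1, t2, t3]
end
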